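/- Let Y = (Y_t)_{t≥0} be a continuous-time Markov chain on a countable set S with 0 ∈ S absorbing, total jump rate r(y) > 0 for y ≠ 0, embedded jump chain Z = (Z_n), and holding times σ_n/r(Z_n) with (σ_n) i.i.d. Exponential(1) independent of Z. Fix a trajectory z = (z_n) of the jump chain along which the set {n : z_n ∈ D} is infinite for some D ⊆ S with sup_{y ∈ D} r(y) < ∞. Then with η(t) := sup{n : Σ_{k=1}^n σ_k/r(z_k) ≤ t}, for every S' > 0: lim_{t→∞} sup_{s ∈ [0,S']} Σ_{n : z_n ∈ D} |P[η(t) = n] − P[η(t+s) = n]| = 0. -/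

import Mathlib

/-!
Write `τ k = σ k / r (z k)` and `T n = τ 1 + ⋯ + τ n`, so that `η u = n` iff `T n ≤ u < T (n + 1)`.
For `1 ≤ k ≤ n`, lowering `τ k` by `s` on the event `{s ≤ τ k}` lowers `T n` and `T (n + 1)` by
`s`, so memorylessness of the exponential law gives
`P[η (t + s) = n, s ≤ τ k] = exp (-r (z k) s) P[η t = n]`.
Averaging this over a set `J` of `M` indices `k ≥ 1` with `z k ∈ D`, we get for `n > max J`
`P[η t = n] = E[Y; η (t + s) = n]` with `Y = M⁻¹ ∑_{k ∈ J} exp (r (z k) s) 1{s ≤ τ k}`.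
By independence `Y` has mean `1` and variance at most `(exp (s sup_D r) - 1) / M`, so the sum over
`n > max J` is at most `E|Y - 1| ≤ √(Var Y)`, small for large `M`; the indices `n ≤ max J` carry
probability at most `2 P[t < T (max J + 1)]`, which tends to `0`.
-/

open MeasureTheory ProbabilityTheory Classical

open Set Filter Topology
open scoped Finset

lemma ENat.iSup_coe_eq_coe_iff {P : ℕ → Prop} (h0 : P 0) (n : ℕ) :
    (⨆ (m : ℕ) (_ : P m), (m : ℕ∞)) = n ↔ P n ∧ ∀ m, n < m → ¬ P m := by
  constructor
  · intro h
    have hle : ∀ m, P m → m ≤ n := fun m hm => by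
      exact_mod_cast h ▸ le_iSup₂ (f := fun (m : ℕ) (_ : P m) => (m : ℕ∞)) m hm
    refine ⟨by_contra fun hn => ?_, fun m hnm hm => (hle m hm).not_gt hnm⟩
    have hn0 : n ≠ 0 := fun h => hn (h ▸ h0)
    have : (n : ℕ∞) ≤ (n - 1 : ℕ) := h ▸ iSup₂_le fun m hm => by
      exact_mod_cast Nat.le_sub_one_of_lt ((hle m hm).lt_of_ne fun h => hn (h ▸ hm))
    exact absurd (by exact_mod_cast this) (by omega : ¬ n ≤ n - 1)
  · rintro ⟨hn, hmax⟩
    refine le_antisymm (iSup₂_le fun m hm => ?_) (le_iSup₂_of_le n hn le_rfl)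
    exact_mod_cast not_lt.1 fun h => hmax m h hm

lemma ProbabilityTheory.iIndepFun.indepFun_sum_prodMk_sum {Ω ι : Type*} [MeasurableSpace Ω]
    {μ : Measure Ω} {τ : ι → Ω → ℝ} (hτ : iIndepFun τ μ) (hm : ∀ i, Measurable (τ i))
    {S₁ S₂ : Finset ι} {k : ι} (h₁ : k ∉ S₁) (h₂ : k ∉ S₂) :
    IndepFun (fun ω => (∑ i ∈ S₁, τ i ω, ∑ i ∈ S₂, τ i ω)) (τ k) μ := by
  have h := hτ.indepFun_finset (S₁ ∪ S₂) {k}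
    (Finset.disjoint_singleton_right.2 (by simp [h₁, h₂])) hm
  let ψ : ((S₁ ∪ S₂ : Finset ι) → ℝ) → ℝ × ℝ := fun v =>
    (∑ i : S₁, v ⟨i, Finset.mem_union_left _ i.2⟩, ∑ i : S₂, v ⟨i, Finset.mem_union_right _ i.2⟩)
  have hψ : Measurable ψ := by fun_prop
  convert h.comp hψ (measurable_pi_apply ⟨k, Finset.mem_singleton_self k⟩) using 1
  · ext ω <;> exact (Finset.sum_attach _ fun i => τ i ω).symm
  · rfl

lemma tendsto_measureReal_lt_atTop {Ω : Type*} [MeasurableSpace Ω] {μ : Measure Ω}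
    [IsFiniteMeasure μ] {X : Ω → ℝ} (hX : Measurable X) :
    Tendsto (fun u => μ.real {ω | u < X ω}) atTop (𝓝 0) := by
  have h := tendsto_measure_iInter_atTop (μ := μ) (s := fun u : ℝ => {ω | u < X ω})
    (fun _ => (measurableSet_lt measurable_const hX).nullMeasurableSet)
    (fun _ _ huv _ h => lt_of_le_of_lt huv h) ⟨0, measure_ne_top μ _⟩
  rw [iInter_eq_empty_iff.2 fun ω => ⟨X ω, lt_irrefl (X ω)⟩, measure_empty] at h
  exact (ENNReal.tendsto_toReal ENNReal.zero_ne_top).comp h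

lemma exists_nat_sqrt_div_le (V : ℝ) {δ : ℝ} (hδ : 0 < δ) : ∃ M : ℕ, 0 < M ∧ √(V / M) ≤ δ := by
  have h : Tendsto (fun M : ℕ => √(V / M)) atTop (𝓝 0) := by
    simpa only [Function.comp_def, Real.sqrt_zero] using
      (Real.continuous_sqrt.tendsto 0).comp (tendsto_const_div_atTop_nhds_zero_nat V)
  exact ((eventually_gt_atTop 0).and (h.eventually_le_const hδ)).exists

section ExponentialTail

variable {Ω β : Type*} [MeasurableSpace Ω] [MeasurableSpace β] {μ : Measure Ω}

def HasExpTail (μ : Measure Ω) (X : Ω → ℝ) (ρ : ℝ) : Prop :=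
  ∀ c, 0 ≤ c → μ {ω | c ≤ X ω} = ENNReal.ofReal (Real.exp (-(ρ * c)))

variable {X : Ω → ℝ} {ρ : ℝ}

lemma HasExpTail.div (hX : HasExpTail μ X ρ) {r : ℝ} (hr : 0 < r) :
    HasExpTail μ (fun ω => X ω / r) (ρ * r) := fun c hc => by
  simp_rw [le_div_iff₀ hr, show ρ * r * c = ρ * (c * r) by ring]
  exact hX _ (mul_nonneg hc hr.le)

lemma HasExpTail.ae_nonneg [IsProbabilityMeasure μ] (hX : HasExpTail μ X ρ)
    (hXm : Measurable X) : ∀ᵐ ω ∂μ, 0 ≤ X ω := by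
  rw [ae_iff_measure_eq (measurableSet_le measurable_const hXm).nullMeasurableSet, hX 0 le_rfl]
  simp

lemma HasExpTail.map_sub_restrict_Ici {ν : Measure ℝ} [IsProbabilityMeasure ν]
    (hν : HasExpTail ν id ρ) {a : ℝ} (ha : 0 ≤ a) :
    (ν.restrict (Ici a)).map (· - a) = ENNReal.ofReal (Real.exp (-(ρ * a))) • ν := by
  have hν' : ∀ c, 0 ≤ c → ν (Ici c) = ENNReal.ofReal (Real.exp (-(ρ * c))) := hν
  refine Measure.ext_of_Ici _ _ fun c => ?_
  have hpre : (· - a) ⁻¹' Ici c ∩ Ici a = Ici (max (c + a) a) := by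
    ext x; simp
  rw [Measure.map_apply (measurable_sub_const a) measurableSet_Ici,
    Measure.restrict_apply (measurable_sub_const a measurableSet_Ici), hpre, Measure.smul_apply,
    smul_eq_mul]
  rcases le_total 0 c with hc | hc
  · rw [max_eq_left (by linarith), hν' _ (by linarith), hν' c hc,
      ← ENNReal.ofReal_mul (Real.exp_nonneg _), ← Real.exp_add]
    ring_nf
  · have hIci : ν (Ici c) = 1 := le_antisymm prob_le_one <| by
      simpa [hν' 0 le_rfl] using measure_mono (μ := ν) (Ici_subset_Ici.2 hc)
    rw [max_eq_right (by linarith), hIci, mul_one, hν' a ha]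

lemma HasExpTail.measure_le_and_sub_mem [IsProbabilityMeasure μ] (hX : HasExpTail μ X ρ)
    (hXm : Measurable X) {Y : Ω → β} (hYm : Measurable Y) (hXY : IndepFun Y X μ) {a : ℝ}
    (ha : 0 ≤ a) {B : Set (β × ℝ)} (hB : MeasurableSet B) :
    μ {ω | a ≤ X ω ∧ (Y ω, X ω - a) ∈ B}
      = ENNReal.ofReal (Real.exp (-(ρ * a))) * μ {ω | (Y ω, X ω) ∈ B} := by
  have hlaw : μ.map (fun ω => (Y ω, X ω)) = (μ.map Y).prod (μ.map X) :=
    (indepFun_iff_map_prod_eq_prod_map_map hYm.aemeasurable hXm.aemeasurable).1 hXY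
  have hν : HasExpTail (μ.map X) id ρ := fun c hc => by
    rw [Measure.map_apply hXm (measurableSet_le measurable_const measurable_id)]
    exact hX c hc
  have := Measure.isProbabilityMeasure_map (μ := μ) hXm.aemeasurable
  have hshift : Measurable (Prod.map id (· - a) : β × ℝ → β × ℝ) :=
    measurable_id.prodMap (measurable_sub_const a)
  have hYX : Measurable fun ω => (Y ω, X ω) := hYm.prodMk hXm
  calc μ {ω | a ≤ X ω ∧ (Y ω, X ω - a) ∈ B}
      = μ.map (fun ω => (Y ω, X ω)) (Prod.map id (· - a) ⁻¹' B ∩ univ ×ˢ Ici a) := by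
        rw [Measure.map_apply hYX ((hshift hB).inter (MeasurableSet.univ.prod measurableSet_Ici))]
        congr 1; ext ω; simp [and_comm]
    _ = ((μ.map Y).prod ((μ.map X).restrict (Ici a))).map (Prod.map id (· - a)) B := by
        rw [Measure.map_apply hshift hB, ← Measure.restrict_univ (μ := μ.map Y),
          Measure.prod_restrict, Measure.restrict_apply (hshift hB), hlaw]
    _ = ENNReal.ofReal (Real.exp (-(ρ * a))) * μ {ω | (Y ω, X ω) ∈ B} := by
        rw [← Measure.map_prod_map _ _ measurable_id (measurable_sub_const a), Measure.map_id,
          hν.map_sub_restrict_Ici ha, Measure.prod_smul_right, Measure.smul_apply, smul_eq_mul,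
          ← hlaw, Measure.map_apply hYX hB]
        rfl

end ExponentialTail

section ChangeOfMeasure

variable {Ω ι : Type*} [MeasurableSpace Ω] {μ : Measure Ω}

lemma integral_abs_sub_integral_le_sqrt_variance [IsProbabilityMeasure μ] {X : Ω → ℝ}
    (hX : MemLp X 2 μ) : ∫ ω, |X ω - μ[X]| ∂μ ≤ √Var[X; μ] := by
  set W : Ω → ℝ := fun ω => |X ω - μ[X]|
  have hW : MemLp W 2 μ := (hX.sub (memLp_const _)).abs
  have hW2 : μ[W ^ 2] = Var[X; μ] := by
    simp [W, variance_eq_integral hX.aemeasurable, sq_abs]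
  have := variance_nonneg W μ
  rw [variance_eq_sub hW, hW2] at this
  exact (Real.le_sqrt (integral_nonneg fun _ => abs_nonneg _) (variance_nonneg X μ)).2
    (by linarith)

lemma integral_abs_average_sub_one_le [IsProbabilityMeasure μ] {J : Finset ι} (hJ : J.Nonempty)
    {X : ι → Ω → ℝ} (hX : ∀ j ∈ J, MemLp (X j) 2 μ)
    (hind : (J : Set ι).Pairwise fun i j => IndepFun (X i) (X j) μ)
    (hmean : ∀ j ∈ J, μ[X j] = 1) {V : ℝ} (hvar : ∀ j ∈ J, Var[X j; μ] ≤ V) :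
    ∫ ω, |(#J : ℝ)⁻¹ * ∑ j ∈ J, X j ω - 1| ∂μ ≤ √(V / #J) := by
  have hJ0 : (0 : ℝ) < #J := by exact_mod_cast hJ.card_pos
  have hsum : (fun ω => ∑ j ∈ J, X j ω) = ∑ j ∈ J, X j := by ext; simp
  set Y : Ω → ℝ := fun ω => (#J : ℝ)⁻¹ * ∑ j ∈ J, X j ω
  have hY : MemLp Y 2 μ := by
    simpa only [Y, Finset.sum_apply] using (memLp_finsetSum' J hX).const_mul (#J : ℝ)⁻¹
  have hmeanY : μ[Y] = 1 := by
    rw [integral_const_mul, integral_finsetSum J fun j hj => (hX j hj).integrable one_le_two,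
      Finset.sum_congr rfl hmean, Finset.sum_const, nsmul_one, inv_mul_cancel₀ hJ0.ne']
  have hvarY : Var[Y; μ] ≤ V / #J := by
    rw [variance_const_mul, hsum, IndepFun.variance_sum hX hind]
    calc ((#J : ℝ)⁻¹) ^ 2 * ∑ j ∈ J, Var[X j; μ] ≤ ((#J : ℝ)⁻¹) ^ 2 * (#J * V) := by
          gcongr; simpa using Finset.sum_le_card_nsmul J _ V hvar
      _ = V / #J := by field_simp
  calc ∫ ω, |(#J : ℝ)⁻¹ * ∑ j ∈ J, X j ω - 1| ∂μ = ∫ ω, |Y ω - μ[Y]| ∂μ := by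
        rw [hmeanY]
    _ ≤ √(V / #J) := (integral_abs_sub_integral_le_sqrt_variance hY).trans
        (Real.sqrt_le_sqrt hvarY)

lemma variance_indicator_const [IsProbabilityMeasure μ] {C : Set Ω} (hC : MeasurableSet C)
    (c : ℝ) : Var[C.indicator fun _ => c; μ] = c ^ 2 * μ.real C * (1 - μ.real C) := by
  have hsq : (C.indicator fun _ => c) ^ 2 = C.indicator fun _ => c ^ 2 := by
    ext ω; by_cases h : ω ∈ C <;> simp [h]
  rw [variance_eq_sub (memLp_indicator_const 2 hC c (Or.inr (measure_ne_top μ C))), hsq,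
    integral_indicator_const _ hC, integral_indicator_const _ hC, smul_eq_mul, smul_eq_mul]
  ring

lemma sum_abs_measureReal_sub_le_integral [IsFiniteMeasure μ] {E E' : ι → Set Ω} (F : Finset ι)
    (hE : ∀ i, MeasurableSet (E i)) (hdisj : Pairwise (Function.onFun Disjoint E)) {Y : Ω → ℝ}
    (hY : Integrable Y μ) (h : ∀ i ∈ F, μ.real (E' i) = ∫ ω in E i, Y ω ∂μ) :
    ∑ i ∈ F, |μ.real (E' i) - μ.real (E i)| ≤ ∫ ω, |Y ω - 1| ∂μ := by
  have hY1 : Integrable (fun ω => Y ω - 1) μ := hY.sub (integrable_const 1)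
  calc ∑ i ∈ F, |μ.real (E' i) - μ.real (E i)| = ∑ i ∈ F, |∫ ω in E i, (Y ω - 1) ∂μ| := by
        refine Finset.sum_congr rfl fun i hi => ?_
        rw [integral_sub hY.integrableOn (integrable_const 1), setIntegral_const, h i hi,
          smul_eq_mul, mul_one]
    _ ≤ ∑ i ∈ F, ∫ ω in E i, |Y ω - 1| ∂μ :=
        Finset.sum_le_sum fun i _ => abs_integral_le_integral_abs
    _ = ∫ ω in ⋃ i ∈ F, E i, |Y ω - 1| ∂μ :=
        (integral_biUnion_finset F (fun i _ => hE i) (hdisj.set_pairwise _)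
          fun i _ => hY1.abs.integrableOn).symm
    _ ≤ ∫ ω, |Y ω - 1| ∂μ :=
        setIntegral_le_integral hY1.abs (Eventually.of_forall fun _ => abs_nonneg _)

lemma setIntegral_average_indicator_eq [IsFiniteMeasure μ] {J : Finset ι} (hJ : J.Nonempty)
    {C : ι → Set Ω} (hC : ∀ j, MeasurableSet (C j)) {c : ι → ℝ} {E E' : Set Ω}
    (h : ∀ j ∈ J, c j * μ.real (E ∩ C j) = μ.real E') :
    ∫ ω in E, (#J : ℝ)⁻¹ * ∑ j ∈ J, (C j).indicator (fun _ => c j) ω ∂μ = μ.real E' := by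
  have hJ0 : (0 : ℝ) < #J := by exact_mod_cast hJ.card_pos
  rw [integral_const_mul, integral_finsetSum J fun j _ => (integrable_const _).indicator (hC j)]
  simp_rw [setIntegral_indicator (hC _), setIntegral_const, smul_eq_mul, mul_comm _ (c _)]
  rw [Finset.sum_congr rfl h, Finset.sum_const, nsmul_eq_mul, ← mul_assoc,
    inv_mul_cancel₀ hJ0.ne', one_mul]

end ChangeOfMeasure

section Renewal

variable {Ω : Type*}

def arrivalTime (τ : ℕ → Ω → ℝ) (n : ℕ) (ω : Ω) : ℝ := ∑ k ∈ Finset.Icc 1 n, τ k ω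

noncomputable def renewalCount (τ : ℕ → Ω → ℝ) (u : ℝ) (ω : Ω) : ℕ∞ :=
  ⨆ (n : ℕ) (_ : arrivalTime τ n ω ≤ u), (n : ℕ∞)

variable {τ : ℕ → Ω → ℝ} {u : ℝ} {ω : Ω} {n : ℕ}

@[simp] lemma arrivalTime_zero : arrivalTime τ 0 ω = 0 := by simp [arrivalTime]

lemma monotone_arrivalTime (hτ : ∀ k, 0 ≤ τ k ω) : Monotone (arrivalTime τ · ω) :=
  fun _ _ h => Finset.sum_le_sum_of_subset_of_nonneg (Finset.Icc_subset_Icc_right h)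
    fun k _ _ => hτ k

lemma renewalCount_eq_iff (hu : 0 ≤ u) :
    renewalCount τ u ω = n ↔ arrivalTime τ n ω ≤ u ∧ ∀ m, n < m → u < arrivalTime τ m ω := by
  rw [renewalCount]
  simpa only [not_le] using
    ENat.iSup_coe_eq_coe_iff (P := fun m => arrivalTime τ m ω ≤ u) (by simpa using hu) n

lemma renewalCount_eq_iff_of_nonneg (hτ : ∀ k, 0 ≤ τ k ω) (hu : 0 ≤ u) :
    renewalCount τ u ω = n ↔ arrivalTime τ n ω ≤ u ∧ u < arrivalTime τ (n + 1) ω := by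
  rw [renewalCount_eq_iff hu]
  exact and_congr_right fun _ =>
    ⟨fun h => h _ n.lt_succ_self, fun h _ hm => h.trans_le (monotone_arrivalTime hτ hm)⟩

lemma lt_arrivalTime_of_renewalCount_eq (hu : 0 ≤ u) (h : renewalCount τ u ω = n) {K : ℕ}
    (hK : n < K) : u < arrivalTime τ K ω :=
  ((renewalCount_eq_iff hu).1 h).2 K hK

lemma pairwise_disjoint_renewalCount_eq (u : ℝ) :
    Pairwise (Function.onFun Disjoint fun n : ℕ => {ω | renewalCount τ u ω = n}) :=
  fun _ _ hmn => Set.disjoint_left.2 fun _ h₁ h₂ => hmn (by exact_mod_cast h₁.symm.trans h₂)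

variable [MeasurableSpace Ω] {μ : Measure Ω}

lemma measurable_arrivalTime (hm : ∀ k, Measurable (τ k)) (n : ℕ) :
    Measurable (arrivalTime τ n) :=
  Finset.measurable_fun_sum _ fun k _ => hm k

lemma measurableSet_renewalCount_eq (hm : ∀ k, Measurable (τ k)) (hu : 0 ≤ u) (n : ℕ) :
    MeasurableSet {ω | renewalCount τ u ω = n} := by
  simp_rw [renewalCount_eq_iff hu, ofPred_and, ofPred_forall]
  exact (measurableSet_le (measurable_arrivalTime hm n) measurable_const).inter <|
    .iInter fun m => .iInter fun _ =>
      measurableSet_lt measurable_const (measurable_arrivalTime hm m)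

lemma renewalCount_eq_ae_eq (hτ : ∀ k, ∀ᵐ ω ∂μ, 0 ≤ τ k ω) (hu : 0 ≤ u) (n : ℕ) :
    {ω | renewalCount τ u ω = n}
      =ᵐ[μ] {ω | arrivalTime τ n ω ≤ u ∧ u < arrivalTime τ (n + 1) ω} := by
  filter_upwards [ae_all_iff.2 hτ] with ω hω
  exact propext (renewalCount_eq_iff_of_nonneg hω hu)

lemma measure_renewalCount_add_eq_inter {ρ t s : ℝ} {k : ℕ} (hind : iIndepFun τ μ)
    (hm : ∀ i, Measurable (τ i)) (hτ : ∀ i, ∀ᵐ ω ∂μ, 0 ≤ τ i ω) (hexp : HasExpTail μ (τ k) ρ)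
    (hk : k ∈ Finset.Icc 1 n) (ht : 0 ≤ t) (hs : 0 ≤ s) :
    μ ({ω | renewalCount τ (t + s) ω = n} ∩ {ω | s ≤ τ k ω})
      = ENNReal.ofReal (Real.exp (-(ρ * s))) * μ {ω | renewalCount τ t ω = n} := by
  have := hind.isProbabilityMeasure
  have hk' : k ∈ Finset.Icc 1 (n + 1) := Finset.Icc_subset_Icc_right n.le_succ hk
  set Y : Ω → ℝ × ℝ := fun ω =>
    (∑ i ∈ (Finset.Icc 1 n).erase k, τ i ω, ∑ i ∈ (Finset.Icc 1 (n + 1)).erase k, τ i ω)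
  have hYm : Measurable Y := by fun_prop
  have hYk : IndepFun Y (τ k) μ :=
    hind.indepFun_sum_prodMk_sum hm (Finset.notMem_erase _ _) (Finset.notMem_erase _ _)
  have harrival : ∀ ω, arrivalTime τ n ω = τ k ω + (Y ω).1 ∧
      arrivalTime τ (n + 1) ω = τ k ω + (Y ω).2 := fun ω =>
    ⟨(Finset.add_sum_erase _ _ hk).symm, (Finset.add_sum_erase _ _ hk').symm⟩
  let B : Set ((ℝ × ℝ) × ℝ) := {p | p.2 + p.1.1 ≤ t ∧ t < p.2 + p.1.2}
  have hB : MeasurableSet B := by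
    simp only [B, ofPred_and]
    exact (measurableSet_le (by fun_prop) measurable_const).inter
      (measurableSet_lt measurable_const (by fun_prop))
  have hshifted : {ω | arrivalTime τ n ω ≤ t + s ∧ t + s < arrivalTime τ (n + 1) ω}
      ∩ {ω | s ≤ τ k ω} = {ω | s ≤ τ k ω ∧ (Y ω, τ k ω - s) ∈ B} := by
    ext ω
    simp only [mem_inter_iff, mem_ofPred_eq, B, harrival ω]
    constructor
    · rintro ⟨⟨h₁, h₂⟩, h₃⟩; exact ⟨h₃, by linarith, by linarith⟩
    · rintro ⟨h₃, h₁, h₂⟩; exact ⟨⟨by linarith, by linarith⟩, h₃⟩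
  have hunshifted : {ω | arrivalTime τ n ω ≤ t ∧ t < arrivalTime τ (n + 1) ω}
      = {ω | (Y ω, τ k ω) ∈ B} := by
    ext ω
    simp only [mem_ofPred_eq, B, harrival ω, add_comm (τ k ω)]
  rw [measure_congr ((renewalCount_eq_ae_eq (u := t + s) hτ (by linarith) n).inter
      (ae_eq_refl {ω | s ≤ τ k ω})), measure_congr (renewalCount_eq_ae_eq hτ ht n), hshifted,
    hunshifted]
  exact hexp.measure_le_and_sub_mem (hm k) hYm hYk hs hB

end Renewal

section Aperiodicity

variable {Ω : Type*} [MeasurableSpace Ω] {μ : Measure Ω}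

noncomputable def shiftDensity (τ : ℕ → Ω → ℝ) (ρ : ℕ → ℝ) (J : Finset ℕ) (s : ℝ) (ω : Ω) : ℝ :=
  (#J : ℝ)⁻¹ * ∑ j ∈ J, {ω | s ≤ τ j ω}.indicator (fun _ => Real.exp (ρ j * s)) ω

variable {τ : ℕ → Ω → ℝ} {ρ : ℕ → ℝ} {J : Finset ℕ} {s : ℝ}

lemma integrable_shiftDensity [IsFiniteMeasure μ] (hm : ∀ i, Measurable (τ i)) :
    Integrable (shiftDensity τ ρ J s) μ :=
  (integrable_finsetSum J fun j _ =>
    (integrable_const _).indicator (measurableSet_le measurable_const (hm j))).const_mul _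

lemma integral_abs_shiftDensity_sub_one_le {a : ℝ} (hind : iIndepFun τ μ)
    (hm : ∀ i, Measurable (τ i)) (hJ : J.Nonempty) (hexp : ∀ j ∈ J, HasExpTail μ (τ j) (ρ j))
    (hs : 0 ≤ s) (ha : ∀ j ∈ J, ρ j * s ≤ a) :
    ∫ ω, |shiftDensity τ ρ J s ω - 1| ∂μ ≤ √((Real.exp a - 1) / #J) := by
  have := hind.isProbabilityMeasure
  have hC : ∀ j, MeasurableSet {ω | s ≤ τ j ω} := fun j => measurableSet_le measurable_const (hm j)
  have hμC : ∀ j ∈ J, μ.real {ω | s ≤ τ j ω} = Real.exp (-(ρ j * s)) := fun j hj => by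
    rw [measureReal_def, hexp j hj s hs, ENNReal.toReal_ofReal (Real.exp_nonneg _)]
  have hexp_mul : ∀ j, Real.exp (ρ j * s) * Real.exp (-(ρ j * s)) = 1 := fun j => by
    rw [← Real.exp_add, add_neg_cancel, Real.exp_zero]
  refine integral_abs_average_sub_one_le hJ
    (fun j _ => memLp_indicator_const 2 (hC j) _ (Or.inr (measure_ne_top μ _)))
    (fun i _ j _ hij => (hind.indepFun hij).comp
      (measurable_const.indicator measurableSet_Ici) (measurable_const.indicator measurableSet_Ici))
    (fun j hj => ?_) (fun j hj => ?_)
  · rw [integral_indicator_const _ (hC j), hμC j hj, smul_eq_mul, mul_comm, hexp_mul]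
  · rw [variance_indicator_const (hC j), hμC j hj]
    have hle : Real.exp (ρ j * s) ≤ Real.exp a := Real.exp_le_exp.2 (ha j hj)
    have : Real.exp (ρ j * s) ^ 2 * Real.exp (-(ρ j * s)) * (1 - Real.exp (-(ρ j * s)))
        = Real.exp (ρ j * s) - 1 := by
      linear_combination
        (Real.exp (ρ j * s) - Real.exp (ρ j * s) * Real.exp (-(ρ j * s)) - 1) * hexp_mul j
    linarith

lemma measureReal_renewalCount_eq_setIntegral_shiftDensity {t : ℝ} {n : ℕ}
    (hind : iIndepFun τ μ) (hm : ∀ i, Measurable (τ i)) (hτ : ∀ i, ∀ᵐ ω ∂μ, 0 ≤ τ i ω)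
    (hJ : J.Nonempty) (hexp : ∀ j ∈ J, HasExpTail μ (τ j) (ρ j)) (hJn : J ⊆ Finset.Icc 1 n)
    (ht : 0 ≤ t) (hs : 0 ≤ s) :
    μ.real {ω | renewalCount τ t ω = n}
      = ∫ ω in {ω | renewalCount τ (t + s) ω = n}, shiftDensity τ ρ J s ω ∂μ := by
  have := hind.isProbabilityMeasure
  refine (setIntegral_average_indicator_eq hJ
    (fun j => measurableSet_le measurable_const (hm j)) fun j hj => ?_).symm
  rw [measureReal_def, measureReal_def, measure_renewalCount_add_eq_inter hind hm hτ (hexp j hj)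
    (hJn hj) ht hs, ENNReal.toReal_mul, ENNReal.toReal_ofReal (Real.exp_nonneg _), ← mul_assoc,
    ← Real.exp_add, add_neg_cancel, Real.exp_zero, one_mul]

lemma sum_measureReal_renewalCount_eq_le [IsFiniteMeasure μ] {u : ℝ} (hm : ∀ i, Measurable (τ i))
    (hu : 0 ≤ u) {K : ℕ} {F : Finset ℕ} (hF : ∀ n ∈ F, n < K) :
    ∑ n ∈ F, μ.real {ω | renewalCount τ u ω = n} ≤ μ.real {ω | u < arrivalTime τ K ω} := by
  rw [← measureReal_biUnion_finset ((pairwise_disjoint_renewalCount_eq u).set_pairwise _)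
    fun n _ => measurableSet_renewalCount_eq hm hu n]
  exact measureReal_mono (iUnion₂_subset fun n hn ω hω =>
    lt_arrivalTime_of_renewalCount_eq hu hω (hF n hn))

lemma sum_abs_measureReal_renewalCount_sub_le_of_lt [IsFiniteMeasure μ] {t : ℝ} {K : ℕ}
    (hm : ∀ i, Measurable (τ i)) (ht : 0 ≤ t) (hs : 0 ≤ s) {F : Finset ℕ} (hF : ∀ n ∈ F, n < K) :
    ∑ n ∈ F, |μ.real {ω | renewalCount τ t ω = n} - μ.real {ω | renewalCount τ (t + s) ω = n}|
      ≤ 2 * μ.real {ω | t < arrivalTime τ K ω} :=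
  calc _ ≤ ∑ n ∈ F, (μ.real {ω | renewalCount τ t ω = n}
          + μ.real {ω | renewalCount τ (t + s) ω = n}) :=
        Finset.sum_le_sum fun n _ => (abs_sub _ _).trans_eq <| by
          rw [abs_of_nonneg measureReal_nonneg, abs_of_nonneg measureReal_nonneg]
    _ ≤ μ.real {ω | t < arrivalTime τ K ω} + μ.real {ω | t + s < arrivalTime τ K ω} := by
        rw [Finset.sum_add_distrib]
        exact add_le_add (sum_measureReal_renewalCount_eq_le hm ht hF)
          (sum_measureReal_renewalCount_eq_le hm (by linarith) hF)
    _ ≤ 2 * μ.real {ω | t < arrivalTime τ K ω} := by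
        have : μ.real {ω | t + s < arrivalTime τ K ω} ≤ μ.real {ω | t < arrivalTime τ K ω} :=
          measureReal_mono fun ω (h : t + s < _) => show t < _ by linarith
        linarith

theorem sum_abs_measureReal_renewalCount_sub_le {t a : ℝ} {K : ℕ} (hind : iIndepFun τ μ)
    (hm : ∀ i, Measurable (τ i)) (hτ : ∀ i, ∀ᵐ ω ∂μ, 0 ≤ τ i ω) (hJ : J.Nonempty)
    (hexp : ∀ j ∈ J, HasExpTail μ (τ j) (ρ j)) (hJK : J ⊆ Finset.Ico 1 K) (ht : 0 ≤ t)
    (hs : 0 ≤ s) (ha : ∀ j ∈ J, ρ j * s ≤ a) (N : ℕ) :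
    ∑ n ∈ Finset.range N, |μ.real {ω | renewalCount τ t ω = n}
        - μ.real {ω | renewalCount τ (t + s) ω = n}|
      ≤ 2 * μ.real {ω | t < arrivalTime τ K ω} + √((Real.exp a - 1) / #J) := by
  have := hind.isProbabilityMeasure
  rw [← Finset.sum_filter_add_sum_filter_not _ (· < K)]
  have hlarge : ∑ n ∈ Finset.range N with ¬n < K, |μ.real {ω | renewalCount τ t ω = n}
        - μ.real {ω | renewalCount τ (t + s) ω = n}| ≤ ∫ ω, |shiftDensity τ ρ J s ω - 1| ∂μ := by
    refine sum_abs_measureReal_sub_le_integral _ (measurableSet_renewalCount_eq hm (by linarith))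
      (pairwise_disjoint_renewalCount_eq _) (integrable_shiftDensity hm) fun n hn => ?_
    refine measureReal_renewalCount_eq_setIntegral_shiftDensity hind hm hτ hJ hexp
      (fun j hj => ?_) ht hs
    have := Finset.mem_Ico.1 (hJK hj)
    have := not_lt.1 (Finset.mem_filter.1 hn).2
    exact Finset.mem_Icc.2 ⟨by omega, by omega⟩
  have hsmall := sum_abs_measureReal_renewalCount_sub_le_of_lt (μ := μ) hm ht hs
    (F := {n ∈ Finset.range N | n < K}) fun n hn => (Finset.mem_filter.1 hn).2
  linarith [integral_abs_shiftDensity_sub_one_le (μ := μ) hind hm hJ hexp hs ha]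

end Aperiodicity

theorem embedded_chain_conditional_aperiodicity_general
    {S : Type*}
    {Ω : Type*} [MeasurableSpace Ω] (μ : Measure Ω) [IsProbabilityMeasure μ]
    (σ : ℕ → Ω → ℝ) (hmeas : ∀ n, Measurable (σ n))
    (hindep : iIndepFun σ μ)
    (hexp : ∀ n : ℕ, ∀ c : ℝ, 0 ≤ c →
      μ {ω | c ≤ σ n ω} = ENNReal.ofReal (Real.exp (-c)))
    (z : ℕ → S) (r : S → ℝ) (hr : ∀ n, 0 < r (z n))
    (D : Set S) (hDbd : ∃ Cbound : ℝ, ∀ y ∈ D, r y ≤ Cbound)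
    (hDinf : {n : ℕ | z n ∈ D}.Infinite)
    (η : ℝ → Ω → ℕ∞)
    (hη : ∀ (t : ℝ) (ω : Ω),
      η t ω = ⨆ (n : ℕ) (_ : ∑ k ∈ Finset.Icc 1 n, σ k ω / r (z k) ≤ t), (n : ℕ∞)) :
    ∀ S' : ℝ, 0 < S' → ∀ ε : ℝ, 0 < ε → ∃ T₀ : ℝ, ∀ t : ℝ, T₀ ≤ t →
      ∀ s ∈ Set.Icc (0:ℝ) S',
        (∑' n : ℕ, if z n ∈ D then
            |(μ {ω | η t ω = (n : ℕ∞)}).toReal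
              - (μ {ω | η (t + s) ω = (n : ℕ∞)}).toReal|
          else 0) ≤ ε := by
  intro S' hS' ε hε
  obtain ⟨L, hL⟩ := hDbd
  set τ : ℕ → Ω → ℝ := fun k ω => σ k ω / r (z k)
  have hτm : ∀ k, Measurable (τ k) := fun k => (hmeas k).div_const _
  have hτexp : ∀ k, HasExpTail μ (τ k) (r (z k)) := fun k => by
    simpa using HasExpTail.div (ρ := 1) (by simpa [HasExpTail] using hexp k) (hr k)
  obtain ⟨M, hM0, hM⟩ := exists_nat_sqrt_div_le (Real.exp (L * S') - 1) (half_pos hε)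
  obtain ⟨J, hJD, rfl⟩ := (hDinf.sdiff (finite_singleton 0)).exists_subset_card_eq M
  obtain ⟨K, hJK⟩ : ∃ K, J ⊆ Finset.Ico 1 K := ⟨J.sup id + 1, fun j hj => Finset.mem_Ico.2
    ⟨Nat.one_le_iff_ne_zero.2 (hJD hj).2, Nat.lt_succ_of_le (Finset.le_sup (f := id) hj)⟩⟩
  obtain ⟨T₀, hT₀⟩ := eventually_atTop.1
    ((tendsto_measureReal_lt_atTop (μ := μ) (measurable_arrivalTime hτm K)).eventually_le_const
      (by positivity : (0 : ℝ) < ε / 4))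
  refine ⟨max T₀ 0, fun t ht s ⟨hs0, hsS'⟩ => ?_⟩
  obtain rfl : η = renewalCount τ := funext fun t => funext fun ω => hη t ω
  refine Real.tsum_le_of_sum_range_le (fun n => by split_ifs <;> positivity) fun N => ?_
  calc _ ≤ ∑ n ∈ Finset.range N, |μ.real {ω | renewalCount τ t ω = n}
          - μ.real {ω | renewalCount τ (t + s) ω = n}| :=
        Finset.sum_le_sum fun n _ => by split_ifs <;> simp [measureReal_def]
    _ ≤ 2 * μ.real {ω | t < arrivalTime τ K ω} + √((Real.exp (L * S') - 1) / #J) :=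
        sum_abs_measureReal_renewalCount_sub_le
          (hindep.comp _ fun k => measurable_div_const (r (z k))) hτm
          (fun k => (hτexp k).ae_nonneg (hτm k)) (Finset.card_pos.1 hM0) (fun j _ => hτexp j)
          hJK (le_of_max_le_right ht) hs0
          (fun j hj => mul_le_mul (hL _ (hJD hj).1) hsS' hs0 ((hr j).le.trans (hL _ (hJD hj).1)))
          N
    _ ≤ ε := by linarith [hT₀ t (le_of_max_le_left ht)]

/-- The conditional aperiodicity statement (3.74)/(3.76) in the proof of
Lemma 14: fix a trajectory `z` of the embedded jump chain of a Markov chain with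
total jump rates `r > 0` outside the trap `0`, such that `z_n ∈ D` for infinitely
many `n`, with `r` bounded on `D`.  Let `σ_n` be i.i.d. exponential mean-one
holding variables, and `η(t) = sup{n : Σ_{k=1}^n σ_k / r(z_k) ≤ t}`.  Then for
every `S' > 0`,
`sup_{s ∈ [0,S']} Σ_{n : z_n ∈ D} |P[η(t) = n] − P[η(t+s) = n]| → 0` as `t → ∞`. -/
theorem embedded_chain_conditional_aperiodicity
    {S : Type*} [Countable S]
    {Ω : Type*} [MeasurableSpace Ω] (μ : Measure Ω) [IsProbabilityMeasure μ]
    (σ : ℕ → Ω → ℝ) (hmeas : ∀ n, Measurable (σ n))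
    (hindep : iIndepFun σ μ)
    (hexp : ∀ n : ℕ, ∀ c : ℝ, 0 ≤ c →
      μ {ω | c ≤ σ n ω} = ENNReal.ofReal (Real.exp (-c)))
    (z : ℕ → S) (r : S → ℝ) (hr : ∀ n, 0 < r (z n))
    (D : Set S) (hDbd : ∃ Cbound : ℝ, ∀ y ∈ D, r y ≤ Cbound)
    (hDinf : {n : ℕ | z n ∈ D}.Infinite)
    (η : ℝ → Ω → ℕ∞)
    (hη : ∀ (t : ℝ) (ω : Ω),
      η t ω = ⨆ (n : ℕ) (_ : ∑ k ∈ Finset.Icc 1 n, σ k ω / r (z k) ≤ t), (n : ℕ∞)) :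
    ∀ S' : ℝ, 0 < S' → ∀ ε : ℝ, 0 < ε → ∃ T₀ : ℝ, ∀ t : ℝ, T₀ ≤ t →
      ∀ s ∈ Set.Icc (0:ℝ) S',
        (∑' n : ℕ, if z n ∈ D then
            |(μ {ω | η t ω = (n : ℕ∞)}).toReal
              - (μ {ω | η (t + s) ω = (n : ℕ∞)}).toReal|
          else 0) ≤ ε :=
  embedded_chain_conditional_aperiodicity_general μ σ hmeas hindep hexp z r hr D hDbd hDinf η hη
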